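/- arXiv:math/0609656 — 6 statements merged into one kernel-verified Lean document; each statement's English description precedes it below -/
import Mathlib

section
/- For any positive integer m and any primitive m-th root of unity η, the sum over j from 1 to m-1 of η^{-j}/(1-η^{-j})² equals -(m²-1)/12. -/
/-!
For `ζ ≠ 1` with `ζ ^ m = 1`, telescoping gives `(1 - ζ) · ∑_{k<m} k ζ^k = -m`, so
`ζ / (1 - ζ)² = ζ (∑_{k<m} k ζ^k)² / m²` is a polynomial in `ζ`. Summing it over all `m`-th roots
of unity `θ^j` and using orthogonality `∑_j θ^{jn} = m · [m ∣ n]` leaves only the pairs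
`k + l + 1 = m`, i.e. `m · ∑_k k (m - 1 - k) = m² (m - 1) (m - 2) / 6`; removing the term `j = 0`,
which is `(m (m - 1) / 2)²`, gives `-(m² - 1) / 12`.
-/

open Finset

section CommRing

variable {R : Type*} [CommRing R]

theorem two_mul_sum_range_natCast (n : ℕ) : 2 * ∑ k ∈ range n, (k : R) = n * (n - 1) := by
  induction n with
  | zero => simp
  | succ n ih => rw [sum_range_succ, mul_add, ih]; push_cast; ring

theorem six_mul_sum_range_natCast_mul_sub (n : ℕ) :
    6 * ∑ k ∈ range n, (k : R) * (n - 1 - k) = n * (n - 1) * (n - 2) := by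
  induction n with
  | zero => simp
  | succ n ih =>
    have hsplit : ∀ k : ℕ, (k : R) * ((n : R) + 1 - 1 - k) = k * (n - 1 - k) + k :=
      fun k => by ring
    rw [sum_range_succ, Nat.cast_succ]
    simp only [hsplit, sum_add_distrib]
    linear_combination ih + 3 * two_mul_sum_range_natCast (R := R) n

theorem one_sub_mul_sum_range_natCast_mul_pow (x : R) (n : ℕ) :
    (1 - x) * ∑ k ∈ range n, (k : R) * x ^ k
      = ∑ k ∈ range n, x ^ k - 1 - ((n : R) - 1) * x ^ n := by
  induction n with
  | zero => simp
  | succ n ih => rw [sum_range_succ, sum_range_succ, mul_add, ih]; push_cast; ring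

end CommRing

theorem sum_range_ite_dvd_add_add_one {M : Type*} [AddCommMonoid M] {m k : ℕ} (hk : k < m)
    (f : ℕ → M) :
    ∑ l ∈ range m, (if m ∣ k + l + 1 then f l else 0) = f (m - 1 - k) := by
  rw [sum_eq_single_of_mem (m - 1 - k) (mem_range.mpr (by omega))]
  · rw [if_pos (by rw [show k + (m - 1 - k) + 1 = m by omega])]
  · intro l hl hlk
    rw [if_neg]
    intro hdvd
    have := Nat.eq_of_dvd_of_lt_two_mul (by omega) hdvd (by simp at hl; omega)
    omega

section Field

variable {K : Type*} [Field K]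

theorem one_sub_mul_sum_range_natCast_mul_pow_of_pow_eq_one {ζ : K} {m : ℕ} (hζm : ζ ^ m = 1)
    (hζ : ζ ≠ 1) : (1 - ζ) * ∑ k ∈ range m, (k : K) * ζ ^ k = -m := by
  rw [one_sub_mul_sum_range_natCast_mul_pow, geom_sum_eq hζ, hζm, sub_self, zero_div]
  ring

theorem div_one_sub_sq_eq_of_pow_eq_one {ζ : K} {m : ℕ} (hm : (m : K) ≠ 0) (hζm : ζ ^ m = 1)
    (hζ : ζ ≠ 1) : ζ / (1 - ζ) ^ 2 = ζ * (∑ k ∈ range m, (k : K) * ζ ^ k) ^ 2 / m ^ 2 := by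
  have hG := one_sub_mul_sum_range_natCast_mul_pow_of_pow_eq_one hζm hζ
  set G := ∑ k ∈ range m, (k : K) * ζ ^ k
  have hG0 : G ≠ 0 := by rintro hG0; rw [hG0, mul_zero] at hG; exact hm (neg_eq_zero.mp hG.symm)
  have h1ζ : 1 - ζ ≠ 0 := sub_ne_zero.mpr (Ne.symm hζ)
  rw [show (m : K) ^ 2 = ((1 - ζ) * G) ^ 2 by rw [hG]; ring]
  field_simp

theorem IsPrimitiveRoot.sum_range_pow_pow {θ : K} {m : ℕ} (hθ : IsPrimitiveRoot θ m) (n : ℕ) :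
    ∑ j ∈ range m, (θ ^ j) ^ n = if m ∣ n then (m : K) else 0 := by
  simp only [pow_right_comm θ _ n]
  split_ifs with h
  · simp [(hθ.pow_eq_one_iff_dvd n).mpr h]
  · rw [geom_sum_eq (mt (hθ.pow_eq_one_iff_dvd n).mp h), pow_right_comm, hθ.pow_eq_one, one_pow,
      sub_self, zero_div]

theorem IsPrimitiveRoot.sum_range_pow_mul_sq_sum {θ : K} {m : ℕ} (hθ : IsPrimitiveRoot θ m) :
    ∑ j ∈ range m, θ ^ j * (∑ k ∈ range m, (k : K) * (θ ^ j) ^ k) ^ 2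
      = m * ∑ k ∈ range m, (k : K) * (m - 1 - k) := by
  have hexpand : ∀ j, θ ^ j * (∑ k ∈ range m, (k : K) * (θ ^ j) ^ k) ^ 2
      = ∑ k ∈ range m, ∑ l ∈ range m, (k : K) * l * (θ ^ j) ^ (k + l + 1) := by
    intro j
    rw [sq, sum_mul_sum, mul_sum]
    refine sum_congr rfl fun k _ => ?_
    rw [mul_sum]
    exact sum_congr rfl fun l _ => by ring
  simp only [hexpand]
  rw [sum_comm, mul_sum]
  refine sum_congr rfl fun k hk => ?_
  have hkm := mem_range.mp hk
  rw [sum_comm]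
  simp only [← mul_sum, hθ.sum_range_pow_pow, mul_ite, mul_zero]
  rw [sum_range_ite_dvd_add_add_one hkm, Nat.cast_sub (by omega), Nat.cast_sub (by omega)]
  push_cast
  ring

theorem IsPrimitiveRoot.sum_Ico_pow_div_one_sub_pow_sq [CharZero K] {θ : K} {m : ℕ}
    (hθ : IsPrimitiveRoot θ m) (hm : 0 < m) :
    ∑ j ∈ Ico 1 m, θ ^ j / (1 - θ ^ j) ^ 2 = -((m : K) ^ 2 - 1) / 12 := by
  have hm0 : (m : K) ≠ 0 := Nat.cast_ne_zero.mpr hm.ne'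
  have hterm : ∀ j ∈ Ico 1 m, θ ^ j / (1 - θ ^ j) ^ 2
      = θ ^ j * (∑ k ∈ range m, (k : K) * (θ ^ j) ^ k) ^ 2 / m ^ 2 := fun j hj =>
    div_one_sub_sq_eq_of_pow_eq_one hm0 (by rw [pow_right_comm, hθ.pow_eq_one, one_pow])
      (hθ.pow_ne_one_of_pos_of_lt (by simp at hj; omega) (mem_Ico.mp hj).2)
  have hfull := hθ.sum_range_pow_mul_sq_sum
  rw [range_eq_Ico, sum_eq_sum_Ico_succ_bot hm] at hfull
  simp only [zero_add, pow_zero, one_pow, one_mul, mul_one, ← range_eq_Ico] at hfull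
  have hid := two_mul_sum_range_natCast (R := K) m
  have hsub := six_mul_sum_range_natCast_mul_sub (R := K) m
  rw [sum_congr rfl hterm, ← sum_div]
  field_simp
  linear_combination (12 : K) * hfull + 2 * m * hsub
    - 3 * (2 * ∑ k ∈ range m, (k : K) + m * (m - 1)) * hid

end Field

/-- For any positive integer `m` and any primitive `m`-th root of unity `η`,
`∑_{j=1}^{m-1} η^{-j}/(1-η^{-j})² = -(m²-1)/12`. -/
theorem stmt0 (m : ℕ) (hm : 0 < m) (η : ℂ) (hη : IsPrimitiveRoot η m) :
    ∑ j ∈ Finset.Ico 1 m, η ^ (-(j : ℤ)) / (1 - η ^ (-(j : ℤ))) ^ 2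
      = -((m : ℂ) ^ 2 - 1) / 12 := by
  simp only [zpow_neg, zpow_natCast, ← inv_pow]
  exact hη.inv.sum_Ico_pow_div_one_sub_pow_sq hm
end

section
/- For any positive integer m and primitive m-th root of unity η, and any complex x with x^m ≠ 1, ∑_{j=1}^{m-1} η^{-j} x/(1-η^{-j}x)² = m² x^m/(1-x^m)² - x/(1-x)². -/
/-!
Over the `m`-th roots of unity `ζ ^ j`, the geometric series gives
`(1 - ζ ^ j * x)⁻¹ = (∑_{k < m} (ζ ^ j * x) ^ k) / (1 - x ^ m)`, and summing over `j` kills every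
power `x ^ k` with `0 < k < m`, so `∑_j (1 - ζ ^ j * x)⁻¹ = m / (1 - x ^ m)`. Differentiating this
identity in `x` and multiplying by `x` gives the sum of `ζ ^ j * x / (1 - ζ ^ j * x) ^ 2`;
the term `j = 0` is `x / (1 - x) ^ 2`.
-/

open Finset

namespace IsPrimitiveRoot

theorem sum_pow_pow_eq_zero {R : Type*} [CommRing R] [IsDomain R] {ζ : R} {m k : ℕ}
    (hζ : IsPrimitiveRoot ζ m) (hk₀ : k ≠ 0) (hkm : k < m) :
    ∑ j ∈ range m, (ζ ^ k) ^ j = 0 := by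
  have hne : 1 - ζ ^ k ≠ 0 := sub_ne_zero.mpr (hζ.pow_ne_one_of_pos_of_lt hk₀ hkm).symm
  refine (mul_eq_zero.mp ?_).resolve_left hne
  rw [mul_neg_geom_sum, pow_right_comm, hζ.pow_eq_one, one_pow, sub_self]

theorem one_sub_pow_mul_mul_geom_sum {R : Type*} [CommRing R] {ζ : R} {m : ℕ}
    (hζ : IsPrimitiveRoot ζ m) (x : R) (j : ℕ) :
    (1 - ζ ^ j * x) * ∑ k ∈ range m, (ζ ^ j * x) ^ k = 1 - x ^ m := by
  rw [mul_neg_geom_sum, mul_pow, pow_right_comm, hζ.pow_eq_one, one_pow, one_mul]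

theorem one_sub_pow_mul_ne_zero {R : Type*} [CommRing R] {ζ : R} {m : ℕ}
    (hζ : IsPrimitiveRoot ζ m) {x : R} (hx : x ^ m ≠ 1) (j : ℕ) : 1 - ζ ^ j * x ≠ 0 :=
  left_ne_zero_of_mul (hζ.one_sub_pow_mul_mul_geom_sum x j ▸ sub_ne_zero.mpr hx.symm)

theorem inv_one_sub_pow_mul_eq_geom_sum_div {K : Type*} [Field K] {ζ : K} {m : ℕ}
    (hζ : IsPrimitiveRoot ζ m) {x : K} (hx : x ^ m ≠ 1) (j : ℕ) :
    (1 - ζ ^ j * x)⁻¹ = (∑ k ∈ range m, (ζ ^ j * x) ^ k) / (1 - x ^ m) := by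
  rw [eq_div_iff (sub_ne_zero.mpr hx.symm), ← hζ.one_sub_pow_mul_mul_geom_sum x j,
    inv_mul_cancel_left₀ (hζ.one_sub_pow_mul_ne_zero hx j)]

theorem sum_inv_one_sub_pow_mul {K : Type*} [Field K] {ζ : K} {m : ℕ}
    (hζ : IsPrimitiveRoot ζ m) {x : K} (hx : x ^ m ≠ 1) :
    ∑ j ∈ range m, (1 - ζ ^ j * x)⁻¹ = m / (1 - x ^ m) := by
  have hm : 0 < m := Nat.pos_of_ne_zero (by rintro rfl; simp at hx)
  simp_rw [hζ.inv_one_sub_pow_mul_eq_geom_sum_div hx, ← sum_div]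
  congr 1
  calc ∑ j ∈ range m, ∑ k ∈ range m, (ζ ^ j * x) ^ k
      = ∑ k ∈ range m, x ^ k * ∑ j ∈ range m, (ζ ^ k) ^ j := by
        rw [sum_comm]
        simp_rw [mul_sum, mul_pow, pow_right_comm, mul_comm]
    _ = x ^ 0 * ∑ j ∈ range m, (ζ ^ 0) ^ j := by
        refine sum_eq_single_of_mem 0 (mem_range.mpr hm) fun k hk hk₀ => ?_
        rw [hζ.sum_pow_pow_eq_zero hk₀ (mem_range.mp hk), mul_zero]
    _ = m := by simp

theorem sum_pow_mul_div_one_sub_pow_mul_sq {𝕜 : Type*} [NontriviallyNormedField 𝕜] {ζ : 𝕜}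
    {m : ℕ} (hζ : IsPrimitiveRoot ζ m) {x : 𝕜} (hx : x ^ m ≠ 1) :
    ∑ j ∈ range m, ζ ^ j * x / (1 - ζ ^ j * x) ^ 2 = (m : 𝕜) ^ 2 * x ^ m / (1 - x ^ m) ^ 2 := by
  have hm : m ≠ 0 := by rintro rfl; simp at hx
  have hxm : 1 - x ^ m ≠ 0 := sub_ne_zero.mpr hx.symm
  have hlhs : HasDerivAt (fun y => ∑ j ∈ range m, (1 - ζ ^ j * y)⁻¹)
      (∑ j ∈ range m, ζ ^ j / (1 - ζ ^ j * x) ^ 2) x :=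
    HasDerivAt.fun_sum fun j _ => ((((hasDerivAt_id x).const_mul (ζ ^ j)).const_sub 1).inv
      (hζ.one_sub_pow_mul_ne_zero hx j)).congr_deriv (by simp)
  have hrhs : HasDerivAt (fun y => (m : 𝕜) / (1 - y ^ m))
      ((m : 𝕜) ^ 2 * x ^ (m - 1) / (1 - x ^ m) ^ 2) x :=
    ((((hasDerivAt_pow m x).const_sub 1).inv hxm).const_mul (m : 𝕜)).congr_deriv (by ring)
      |>.congr_of_eventuallyEq (by simp [div_eq_mul_inv])
  have hopen : {y : 𝕜 | y ^ m ≠ 1} ∈ nhds x :=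
    (isOpen_ne_fun (continuous_pow m) continuous_const).mem_nhds hx
  have hderiv := (hlhs.congr_of_eventuallyEq (Filter.eventuallyEq_of_mem hopen
    fun y hy => (hζ.sum_inv_one_sub_pow_mul hy).symm)).unique hrhs
  calc ∑ j ∈ range m, ζ ^ j * x / (1 - ζ ^ j * x) ^ 2
      = x * ∑ j ∈ range m, ζ ^ j / (1 - ζ ^ j * x) ^ 2 := by
        rw [mul_sum]
        exact sum_congr rfl fun j _ => by ring
    _ = (m : 𝕜) ^ 2 * x ^ m / (1 - x ^ m) ^ 2 := by
        rw [hderiv, mul_div_assoc', mul_left_comm, mul_pow_sub_one hm x]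

end IsPrimitiveRoot

theorem stmt3_general (m : ℕ) (η : ℂ) (hη : IsPrimitiveRoot η m)
    (x : ℂ) (hx : x ^ m ≠ 1) :
    ∑ j ∈ Finset.Ico 1 m, η ^ (-(j : ℤ)) * x / (1 - η ^ (-(j : ℤ)) * x) ^ 2
      = (m : ℂ) ^ 2 * x ^ m / (1 - x ^ m) ^ 2 - x / (1 - x) ^ 2 := by
  have hm : 0 < m := Nat.pos_of_ne_zero (by rintro rfl; simp at hx)
  have hsum := hη.inv.sum_pow_mul_div_one_sub_pow_mul_sq hx
  rw [sum_range_eq_add_Ico _ hm] at hsum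
  simp only [zpow_neg, zpow_natCast, inv_pow, pow_zero, one_mul] at hsum ⊢
  linear_combination hsum

/-- For a primitive `m`-th root of unity `η` and `x` with `x^m ≠ 1`,
`∑_{j=1}^{m-1} η^{-j}x/(1-η^{-j}x)² = m²x^m/(1-x^m)² - x/(1-x)²`. -/
theorem stmt3 (m : ℕ) (hm : 0 < m) (η : ℂ) (hη : IsPrimitiveRoot η m)
    (x : ℂ) (hx : x ^ m ≠ 1) (hx1 : x ≠ 1) :
    ∑ j ∈ Finset.Ico 1 m, η ^ (-(j : ℤ)) * x / (1 - η ^ (-(j : ℤ)) * x) ^ 2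
      = (m : ℂ) ^ 2 * x ^ m / (1 - x ^ m) ^ 2 - x / (1 - x) ^ 2 :=
  stmt3_general m η hη x hx
end

section
/- The limit as x → 1 of m² x^m/(1-x^m)² - x/(1-x)² equals -(m²-1)/12. -/
/-!
Substituting `x = exp z` turns the expression into `m² g (m z) - g z` with
`g z = exp z / (1 - exp z)²`. Since `g z = 1 / z² - 1 / 12 + o(1)` as `z → 0` and
`m² / (m z)² = 1 / z²`, the poles cancel and the constant terms leave `-(m² - 1) / 12`.
The constant `-1 / 12` is the `w⁴`-coefficient of `w² exp w - (1 - exp w)²`, whose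
expansion starts at `w⁴`.
-/

open Filter Complex Asymptotics Topology Finset

noncomputable def expTaylorRemainder (n : ℕ) (w : ℂ) : ℂ :=
  exp w - ∑ i ∈ range n, w ^ i / i.factorial

lemma expTaylorRemainder_succ_isLittleO (n : ℕ) :
    expTaylorRemainder (n + 1) =o[𝓝 0] (· ^ n) :=
  exp_sub_sum_range_succ_isLittleO_pow n

lemma expTaylorRemainder_comp_const_mul_succ_isLittleO (n : ℕ) (c : ℂ) :
    (fun w => expTaylorRemainder (n + 1) (c * w)) =o[𝓝 0] (· ^ n) := by
  have hc : Tendsto (c * ·) (𝓝 0) (𝓝 0) := by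
    simpa using (continuous_const_mul c).tendsto 0
  refine ((expTaylorRemainder_succ_isLittleO n).comp_tendsto hc).trans_isBigO ?_
  simpa only [Function.comp_def, mul_pow] using isBigO_const_mul_self (c ^ n) (· ^ n) (𝓝 0)

lemma sq_mul_exp_sub_one_sub_exp_sq (w : ℂ) :
    w ^ 2 * exp w - (1 - exp w) ^ 2 =
      (-1 / 12 * w ^ 4 + w ^ 5 / 6 + w ^ 6 / 24) +
        ((w ^ 2 + 2) * expTaylorRemainder 5 w - expTaylorRemainder 5 (2 * w)) := by
  have hexp_two_mul : exp w ^ 2 = exp (2 * w) := by rw [two_mul, exp_add, sq]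
  simp only [expTaylorRemainder, sum_range_succ, sum_range_zero, Nat.factorial]
  push_cast
  rw [sub_sq, one_pow, mul_one, hexp_two_mul]
  ring

lemma tendsto_sq_mul_exp_sub_one_sub_exp_sq_div_pow_four :
    Tendsto (fun w : ℂ => (w ^ 2 * exp w - (1 - exp w) ^ 2) / w ^ 4) (𝓝[≠] 0)
      (𝓝 (-1 / 12)) := by
  have hremainder :
      (fun w => (w ^ 2 + 2) * expTaylorRemainder 5 w - expTaylorRemainder 5 (2 * w))
        =o[𝓝 0] (· ^ 4) := by
    have hbdd : (fun w : ℂ => w ^ 2 + 2) =O[𝓝 0] (fun _ => (1 : ℂ)) :=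
      (Continuous.tendsto (by fun_prop) 0).isBigO_one ℂ
    have hprod := hbdd.mul_isLittleO (expTaylorRemainder_succ_isLittleO 4)
    simp only [one_mul] at hprod
    exact hprod.sub (expTaylorRemainder_comp_const_mul_succ_isLittleO 4 2)
  have hpoly : Tendsto (fun w : ℂ => -1 / 12 + w / 6 + w ^ 2 / 24) (𝓝 0) (𝓝 (-1 / 12)) :=
    Continuous.tendsto' (by fun_prop) 0 _ (by simp)
  have hsum := hpoly.add hremainder.tendsto_div_nhds_zero
  rw [add_zero] at hsum
  refine (hsum.mono_left nhdsWithin_le_nhds).congr' ?_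
  filter_upwards [self_mem_nhdsWithin] with w (hw : w ≠ 0)
  rw [sq_mul_exp_sub_one_sub_exp_sq]
  field_simp

lemma tendsto_exp_sub_one_div :
    Tendsto (fun w : ℂ => (exp w - 1) / w) (𝓝[≠] 0) (𝓝 1) := by
  have hslope := hasDerivAt_iff_tendsto_slope.1 (by simpa using hasDerivAt_exp (0 : ℂ))
  refine hslope.congr fun w => ?_
  simp [slope_def_field]

lemma tendsto_exp_div_one_sub_exp_sq_sub_one_div_sq :
    Tendsto (fun w : ℂ => exp w / (1 - exp w) ^ 2 - 1 / w ^ 2) (𝓝[≠] 0) (𝓝 (-1 / 12)) := by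
  have hquot := tendsto_exp_sub_one_div
  have hlim := tendsto_sq_mul_exp_sub_one_sub_exp_sq_div_pow_four.div (hquot.pow 2) (by norm_num)
  rw [one_pow, div_one] at hlim
  refine hlim.congr' ?_
  filter_upwards [self_mem_nhdsWithin, hquot.eventually_ne one_ne_zero] with w (hw : w ≠ 0) hq
  have hexp : exp w - 1 ≠ 0 := (div_ne_zero_iff.1 hq).1
  have hexp' : 1 - exp w ≠ 0 := by rwa [← neg_sub, neg_ne_zero]
  simp only [Pi.div_apply]
  field_simp
  ring

lemma tendsto_const_mul_nhdsNE_zero {c : ℂ} (hc : c ≠ 0) :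
    Tendsto (c * ·) (𝓝[≠] 0) (𝓝[≠] 0) := by
  refine tendsto_nhdsWithin_iff.2 ⟨?_, ?_⟩
  · simpa using ((continuous_const_mul c).tendsto 0).mono_left nhdsWithin_le_nhds
  · filter_upwards [self_mem_nhdsWithin] with z hz using mul_ne_zero hc hz

lemma tendsto_const_sq_mul_exp_div_one_sub_exp_sq_sub {c : ℂ} (hc : c ≠ 0) :
    Tendsto (fun z => c ^ 2 * (exp (c * z) / (1 - exp (c * z)) ^ 2) - exp z / (1 - exp z) ^ 2)
      (𝓝[≠] 0) (𝓝 (-(c ^ 2 - 1) / 12)) := by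
  have h := tendsto_exp_div_one_sub_exp_sq_sub_one_div_sq
  have hc' := ((h.comp (tendsto_const_mul_nhdsNE_zero hc)).const_mul (c ^ 2)).sub h
  convert hc' using 2 with z
  · simp only [Function.comp_apply]
    field_simp
    ring
  · ring

lemma tendsto_log_nhdsNE_one : Tendsto log (𝓝[≠] 1) (𝓝[≠] 0) := by
  refine tendsto_nhdsWithin_iff.2 ⟨?_, ?_⟩
  · simpa using (continuousAt_clog one_mem_slitPlane).tendsto.mono_left nhdsWithin_le_nhds
  · filter_upwards [self_mem_nhdsWithin, nhdsWithin_le_nhds (isOpen_ne.mem_nhds one_ne_zero)]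
      with x (hx1 : x ≠ 1) (hx0 : x ≠ 0) hlog
    exact hx1 (by rw [← exp_log hx0, show log x = 0 from hlog, exp_zero])

/-- The limit as `x → 1` (along `x` with `x^m ≠ 1`) of
`m² x^m/(1-x^m)² - x/(1-x)²` is `-(m²-1)/12`. -/
theorem stmt4 (m : ℕ) (hm : 0 < m) :
    Filter.Tendsto
      (fun x : ℂ => (m : ℂ) ^ 2 * x ^ m / (1 - x ^ m) ^ 2 - x / (1 - x) ^ 2)
      (nhdsWithin 1 {x : ℂ | x ^ m ≠ 1})
      (nhds (-((m : ℂ) ^ 2 - 1) / 12)) := by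
  have hlog : Tendsto log (𝓝[{x : ℂ | x ^ m ≠ 1}] 1) (𝓝[≠] 0) :=
    tendsto_log_nhdsNE_one.mono_left <|
      nhdsWithin_mono _ fun x hx (h1 : x = 1) => hx (by rw [h1, one_pow])
  have hm' : (m : ℂ) ≠ 0 := Nat.cast_ne_zero.2 hm.ne'
  refine ((tendsto_const_sq_mul_exp_div_one_sub_exp_sq_sub hm').comp hlog).congr' ?_
  filter_upwards [nhdsWithin_le_nhds (isOpen_ne.mem_nhds one_ne_zero)] with x (hx0 : x ≠ 0)
  simp only [Function.comp_apply, exp_nat_mul, exp_log hx0]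
  ring
end

section
/- With L = K^k, ν the cyclic shift, and αᵢ, βᵢ ∈ K for i = 1,…,k-1, set α = (α₁,…,α_{k-1}, -∑αᵢ) and β = (β₁,…,β_{k-1}, -∑βᵢ) in L. Then ∑_{j=0}^{k-1} j ⟨ν^j α, β⟩ = -k ∑_{n=1}^{k-1} ∑_{j=1}^{n} ⟨α_n, β_j⟩; in particular it is divisible by k. -/
/-!
Since `ν^j α` has `i`-th entry `α (i + j)`, the left-hand side is `∑_{i,m} c(m,i) ⟨α_m, β_i⟩`
where `c(m,i) = m - i + k·[m < i]` is the least residue of `m - i` modulo `k`. The entries of `α`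
and of `β` sum to zero, so by biadditivity the part `m - i` contributes nothing, leaving
`k ∑_{m<i} ⟨α_m, β_i⟩`. In that sum the terms with `i` the last index pair `α_m` with
`-∑_j β_j`, and together with the remaining terms `m < i < k` they give `-∑_{j ≤ m} ⟨α_m, β_j⟩`.
-/

open Finset

theorem Fin.natCast_val_sub {k : ℕ} {R : Type*} [Ring R] (m i : Fin k) :
    (((m - i : Fin k) : ℕ) : R) = (m : ℕ) - (i : ℕ) + if m < i then (k : R) else 0 := by
  split_ifs with h
  · rw [Fin.coe_sub_iff_lt.mpr h, Nat.cast_sub (by omega), Nat.cast_add]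
    abel
  · rw [Fin.coe_sub_iff_le.mpr (not_lt.mp h), Nat.cast_sub (by simpa using not_lt.mp h), add_zero]

section CyclicShift

variable {k : ℕ} [NeZero k]
open Fin.NatCast

theorem iterate_apply_of_shift {X : Type*} {shift : (Fin k → X) → Fin k → X}
    (hshift : ∀ v i, shift v i = v (i + 1)) (j : ℕ) (v : Fin k → X) (i : Fin k) :
    shift^[j] v i = v (i + j) := by
  induction j generalizing v with
  | zero => simp
  | succ j ih => rw [Function.iterate_succ_apply, ih, hshift, Nat.cast_succ, add_assoc]

theorem Fin.sum_range_natCast_mul_add {R : Type*} [Semiring R] (g : Fin k → R) (i : Fin k) :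
    ∑ j ∈ range k, (j : R) * g (i + j) = ∑ m, (((m - i : Fin k) : ℕ) : R) * g m := by
  rw [← Fin.sum_univ_eq_sum_range (fun j : ℕ => (j : R) * g (i + j))]
  exact Fintype.sum_equiv (Equiv.addLeft i) _ _ fun j => by simp

end CyclicShift

section Biadditive

variable {M N R : Type*} [AddCommGroup M] [AddCommGroup N] [CommRing R] (f : M →+ N →+ R)

theorem sum_sum_sub_mul_eq_zero {ι : Type*} [Fintype ι] (c d : ι → R) {v : ι → M} {w : ι → N}
    (hv : ∑ m, v m = 0) (hw : ∑ i, w i = 0) :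
    ∑ i, ∑ m, (c m - d i) * f (v m) (w i) = 0 := by
  have hc : ∑ i, ∑ m, c m * f (v m) (w i) = 0 := by
    rw [sum_comm]
    simp only [← mul_sum, ← map_sum, hw, map_zero, mul_zero, sum_const_zero]
  have hd : ∑ i, ∑ m, d i * f (v m) (w i) = 0 := by
    simp only [← mul_sum, ← AddMonoidHom.finsetSum_apply, ← map_sum, hv, map_zero,
      AddMonoidHom.zero_apply, mul_zero, sum_const_zero]
  simp only [sub_mul, sum_sub_distrib, hc, hd, sub_zero]

theorem sum_sum_val_sub_mul {k : ℕ} [NeZero k] {v : Fin k → M} {w : Fin k → N}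
    (hv : ∑ m, v m = 0) (hw : ∑ i, w i = 0) :
    ∑ i, ∑ m, (((m - i : Fin k) : ℕ) : R) * f (v m) (w i)
      = k * ∑ i, ∑ m, if m < i then f (v m) (w i) else 0 := by
  have hlin := sum_sum_sub_mul_eq_zero f (fun m : Fin k => ((m : ℕ) : R)) (fun i => (i : ℕ)) hv hw
  simp only [Fin.natCast_val_sub, add_mul, sum_add_distrib, hlin, zero_add, mul_sum, ite_mul,
    zero_mul, mul_ite, mul_zero]

theorem sum_sum_lt_snoc {n : ℕ} (a : Fin n → M) (x : M) (b : Fin n → N) :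
    ∑ i, ∑ m, (if m < i then
        f (Fin.snoc (α := fun _ => M) a x m) (Fin.snoc (α := fun _ => N) b (-∑ j, b j) i) else 0)
      = -∑ m, ∑ j, if j ≤ m then f (a m) (b j) else 0 := by
  simp only [Fin.sum_univ_castSucc (n := n), Fin.snoc_castSucc, Fin.snoc_last,
    Fin.castSucc_lt_castSucc_iff, Fin.castSucc_lt_last, not_lt.mpr (Fin.le_last _), if_true,
    if_false, add_zero, map_neg, map_sum]
  rw [sum_comm, ← sum_add_distrib, ← sum_neg_distrib]
  refine sum_congr rfl fun m _ => ?_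
  rw [← sum_neg_distrib, ← sum_add_distrib, ← sum_neg_distrib]
  refine sum_congr rfl fun j _ => ?_
  by_cases h : m < j
  · rw [if_pos h, if_neg (not_le.mpr h), add_neg_cancel, neg_zero]
  · rw [if_neg h, if_pos (not_lt.mp h), zero_add]

open Fin.NatCast in
theorem sum_range_mul_iterate_shift_snoc {n : ℕ} {shift : (Fin (n + 1) → M) → Fin (n + 1) → M}
    (hshift : ∀ v i, shift v i = v (i + 1)) (a : Fin n → M) (b : Fin n → N) :
    ∑ j ∈ range (n + 1), (j : R) * ∑ i,
        f (shift^[j] (Fin.snoc a (-∑ m, a m)) i) (Fin.snoc (α := fun _ => N) b (-∑ m, b m) i)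
      = -((n + 1 : ℕ) : R) * ∑ m, ∑ j, if j ≤ m then f (a m) (b j) else 0 := by
  set α : Fin (n + 1) → M := Fin.snoc a (-∑ m, a m)
  set β : Fin (n + 1) → N := Fin.snoc b (-∑ m, b m)
  have hα : ∑ m, α m = 0 := by simp [α, Fin.sum_univ_castSucc]
  have hβ : ∑ i, β i = 0 := by simp [β, Fin.sum_univ_castSucc]
  calc _ = ∑ i, ∑ j ∈ range (n + 1), (j : R) * f (α (i + j)) (β i) := by
        simp only [iterate_apply_of_shift hshift, mul_sum]
        exact sum_comm
    _ = ∑ i, ∑ m, (((m - i : Fin (n + 1)) : ℕ) : R) * f (α m) (β i) :=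
        sum_congr rfl fun i _ => Fin.sum_range_natCast_mul_add (fun m => f (α m) (β i)) i
    _ = _ := by rw [sum_sum_val_sub_mul f hα hβ, sum_sum_lt_snoc, mul_neg, neg_mul]

end Biadditive

theorem stmt9_general (K : Type*) [AddCommGroup K] (B : K → K → ℤ)
    (hadd₁ : ∀ a b c, B (a + b) c = B a c + B b c)
    (hadd₂ : ∀ a b c, B a (b + c) = B a b + B a c)
    (k : ℕ) [NeZero k]
    (BL : (Fin k → K) → (Fin k → K) → ℤ)
    (hBL : ∀ v w, BL v w = ∑ i, B (v i) (w i))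
    (shift : (Fin k → K) → (Fin k → K))
    (hshift : ∀ v i, shift v i = v (i + 1))
    (a b : Fin (k - 1) → K)
    (α β : Fin k → K)
    (hα : α = fun i : Fin k => if h : (i : ℕ) < k - 1 then a ⟨i, h⟩ else -∑ j, a j)
    (hβ : β = fun i : Fin k => if h : (i : ℕ) < k - 1 then b ⟨i, h⟩ else -∑ j, b j) :
    ∑ j ∈ Finset.range k, (j : ℤ) * BL (shift^[j] α) β
      = -(k : ℤ) * ∑ n : Fin (k - 1), ∑ j : Fin (k - 1),
          if (j : ℕ) ≤ (n : ℕ) then B (a n) (b j) else 0 := by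
  obtain ⟨n, rfl⟩ := Nat.exists_eq_add_one_of_ne_zero (NeZero.ne k)
  let f : K →+ K →+ ℤ :=
    AddMonoidHom.mk' (fun x => AddMonoidHom.mk' (B x) (hadd₂ x)) fun x y =>
      AddMonoidHom.ext (hadd₁ x y)
  -- `Fin.snoc` unfolds definitionally to the `dite` in `hα` and `hβ`.
  replace hα : α = Fin.snoc a (-∑ j, a j) := hα
  replace hβ : β = Fin.snoc b (-∑ j, b j) := hβ
  subst hα hβ
  simp only [hBL]
  exact sum_range_mul_iterate_shift_snoc f hshift a b

/-- For `α = (α₁,…,α_{k-1},-∑αᵢ)` and `β = (β₁,…,β_{k-1},-∑βᵢ)` in `L = K^k` with `ν` the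
cyclic shift, `∑_{j=0}^{k-1} j⟨ν^j α, β⟩ = -k ∑_{n=1}^{k-1} ∑_{j=1}^{n} ⟨α_n, β_j⟩`. -/
theorem stmt9 (K : Type*) [AddCommGroup K] (B : K → K → ℤ)
    (hsym : ∀ a b, B a b = B b a)
    (hadd₁ : ∀ a b c, B (a + b) c = B a c + B b c)
    (hadd₂ : ∀ a b c, B a (b + c) = B a b + B a c)
    (k : ℕ) (hk : 0 < k) [NeZero k]
    (BL : (Fin k → K) → (Fin k → K) → ℤ)
    (hBL : ∀ v w, BL v w = ∑ i, B (v i) (w i))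
    (shift : (Fin k → K) → (Fin k → K))
    (hshift : ∀ v i, shift v i = v (i + 1))
    (a b : Fin (k - 1) → K)
    (α β : Fin k → K)
    (hα : α = fun i : Fin k => if h : (i : ℕ) < k - 1 then a ⟨i, h⟩ else -∑ j, a j)
    (hβ : β = fun i : Fin k => if h : (i : ℕ) < k - 1 then b ⟨i, h⟩ else -∑ j, b j) :
    ∑ j ∈ Finset.range k, (j : ℤ) * BL (shift^[j] α) β
      = -(k : ℤ) * ∑ n : Fin (k - 1), ∑ j : Fin (k - 1),
          if (j : ℕ) ≤ (n : ℕ) then B (a n) (b j) else 0 :=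
  stmt9_general K B hadd₁ hadd₂ k BL hBL shift hshift a b α β hα hβ
end

section
/- For a k-th root of unity η and a primitive such root, the commutator function C(α,β) = ∏_{j=0}^{k-1} (-η^j)^{⟨ν^j α, β⟩} on L = K^k satisfies C(α,β) = 1 whenever α, β ∈ N = {(α₁,…,α_{k-1}, -∑αᵢ)}. That is, the restriction of C to N × N is trivial. -/
/-!
Write `M l i = ⟨α_l, β_i⟩`, so that the exponent of `-η^j` is the `j`-th cyclic diagonal sum
`∑ᵢ M (i + j) i`. Since `α, β ∈ N` have coordinate sum `0` (nondegeneracy), every row and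
column sum of `M` vanishes. Writing `η^j = η^l / η^i` for `l = i + j`, the product regroups into
`∏ₗ (-η^l)^(row sum l) / ∏ᵢ (η^i)^(column sum i) = 1`.
-/

open Finset

theorem zpow_sum {ι A : Type*} [CommGroup A] (a : A) (s : Finset ι) (f : ι → ℤ) :
    a ^ (∑ i ∈ s, f i) = ∏ i ∈ s, a ^ f i := by
  induction s using Finset.cons_induction with
  | empty => simp
  | cons i s hi ih => rw [sum_cons, prod_cons, zpow_add, ih]

namespace AddChar

def finChar (n : ℕ) [NeZero n] {C : Type*} [CommMonoid C] {ζ : C} (hζ : ζ ^ n = 1) :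
    AddChar (Fin n) C where
  toFun j := ζ ^ j.val
  map_zero_eq_one' := by simp
  map_add_eq_mul' a b := by rw [Fin.val_add, ← pow_eq_pow_mod _ hζ, pow_add]

theorem finChar_apply (n : ℕ) [NeZero n] {C : Type*} [CommMonoid C] {ζ : C} (hζ : ζ ^ n = 1)
    (j : Fin n) : finChar n hζ j = ζ ^ j.val :=
  rfl

variable {G A : Type*} [AddCommGroup G] [Fintype G] [CommGroup A]

theorem prod_mul_zpow_sum_add_eq_one (c : A) (ψ : AddChar G A) (M : G → G → ℤ)
    (hrow : ∀ l, ∑ i, M l i = 0) (hcol : ∀ i, ∑ l, M l i = 0) :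
    ∏ j, (c * ψ j) ^ ∑ i, M (i + j) i = 1 :=
  calc ∏ j, (c * ψ j) ^ ∑ i, M (i + j) i
      = ∏ j, ∏ i, (c * ψ (i + j) / ψ i) ^ M (i + j) i := by
        simp only [map_add_eq_mul, zpow_sum, mul_div_assoc, mul_div_cancel]
    _ = ∏ l, ∏ i, (c * ψ l / ψ i) ^ M l i := by
        rw [prod_comm]
        conv_rhs => rw [prod_comm]
        exact prod_congr rfl fun i _ ↦ Fintype.prod_equiv (Equiv.addLeft i) _ _ fun _ ↦ rfl
    _ = (∏ l, ∏ i, (c * ψ l) ^ M l i) / ∏ i, ∏ l, ψ i ^ M l i := by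
        simp only [div_zpow, prod_div_distrib]
        rw [prod_comm (γ := G) (f := fun l i ↦ ψ i ^ M l i)]
    _ = 1 := by simp only [← zpow_sum, hrow, hcol, zpow_zero, prod_const_one, div_one]

end AddChar

section

open Fin.NatCast

theorem iterate_shift_apply {n : ℕ} [NeZero n] {X : Type*}
    (shift : (Fin n → X) → (Fin n → X)) (hshift : ∀ v i, shift v i = v (i + 1))
    (v : Fin n → X) (j : ℕ) (i : Fin n) : shift^[j] v i = v (i + j) := by
  induction j generalizing i with
  | zero => simp
  | succ j ih =>
    rw [Function.iterate_succ_apply', hshift, ih, Nat.cast_succ, add_assoc, add_comm 1]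

end

theorem stmt10_general (K : Type*) [AddCommGroup K] (B : K → K → ℤ)
    (hadd₁ : ∀ a b c, B (a + b) c = B a c + B b c)
    (hadd₂ : ∀ a b c, B a (b + c) = B a b + B a c)
    (hnd : ∀ a, (∀ c, B a c = 0) → a = 0)
    (k : ℕ) [NeZero k]
    (η : ℂ) (hη : IsPrimitiveRoot η k)
    (BL : (Fin k → K) → (Fin k → K) → ℤ)
    (hBL : ∀ v w, BL v w = ∑ i, B (v i) (w i))
    (shift : (Fin k → K) → (Fin k → K))
    (hshift : ∀ v i, shift v i = v (i + 1))
    (α β : Fin k → K)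
    (hαN : ∀ c : K, BL α (fun _ => c) = 0)
    (hβN : ∀ c : K, BL β (fun _ => c) = 0) :
    ∏ j ∈ Finset.range k, (-η ^ j) ^ (BL (shift^[j] α) β) = 1 := by
  let Bl (c : K) : K →+ ℤ := AddMonoidHom.mk' (B · c) (hadd₁ · · c)
  let Br (a : K) : K →+ ℤ := AddMonoidHom.mk' (B a) (hadd₂ a)
  have hsum_eq_zero {γ : Fin k → K} (hγ : ∀ c, BL γ (fun _ ↦ c) = 0) : ∑ i, γ i = 0 :=
    hnd _ fun c ↦ by rw [← hγ c, hBL]; exact map_sum (Bl c) γ univ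
  have hrow (l : Fin k) : ∑ i, B (α l) (β i) = 0 := by
    change ∑ i, Br (α l) (β i) = 0
    rw [← map_sum, hsum_eq_zero hβN, map_zero]
  have hcol (i : Fin k) : ∑ l, B (α l) (β i) = 0 := by
    change ∑ l, Bl (β i) (α l) = 0
    rw [← map_sum, hsum_eq_zero hαN, map_zero]
  have hexp (j : Fin k) : BL (shift^[j] α) β = ∑ i, B (α (i + j)) (β i) := by
    simp only [hBL, iterate_shift_apply shift hshift, Fin.cast_val_eq_self]
  let ζ : ℂˣ := (hη.isUnit (NeZero.ne k)).unit
  have hζ : ζ ^ k = 1 := Units.ext <| by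
    simp only [ζ, Units.val_pow_eq_pow_val, IsUnit.unit_spec, hη.pow_eq_one, Units.val_one]
  have key := AddChar.prod_mul_zpow_sum_add_eq_one (-1) (AddChar.finChar k hζ) _ hrow hcol
  rw [← Fin.prod_univ_eq_prod_range, ← Units.val_one, ← key]
  push_cast [Units.coe_prod, Units.val_zpow_eq_zpow_val, AddChar.finChar_apply, hexp]
  simp only [ζ, IsUnit.unit_spec, neg_one_mul]

/-- The commutator map `C(α,β) = ∏_{j=0}^{k-1} (-η^j)^{⟨ν^j α, β⟩}` on `L = K^k` is trivial on
`N × N`, where `N` consists of those `γ ∈ L` orthogonal to all diagonal vectors. -/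
theorem stmt10 (K : Type*) [AddCommGroup K] (B : K → K → ℤ)
    (hsym : ∀ a b, B a b = B b a)
    (hadd₁ : ∀ a b c, B (a + b) c = B a c + B b c)
    (hadd₂ : ∀ a b c, B a (b + c) = B a b + B a c)
    (heven : ∀ a, Even (B a a))
    (hnd : ∀ a, (∀ c, B a c = 0) → a = 0)
    (k : ℕ) (hk : 0 < k) [NeZero k]
    (η : ℂ) (hη : IsPrimitiveRoot η k)
    (BL : (Fin k → K) → (Fin k → K) → ℤ)
    (hBL : ∀ v w, BL v w = ∑ i, B (v i) (w i))
    (shift : (Fin k → K) → (Fin k → K))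
    (hshift : ∀ v i, shift v i = v (i + 1))
    (α β : Fin k → K)
    (hαN : ∀ c : K, BL α (fun _ => c) = 0)
    (hβN : ∀ c : K, BL β (fun _ => c) = 0) :
    ∏ j ∈ Finset.range k, (-η ^ j) ^ (BL (shift^[j] α) β) = 1 :=
  stmt10_general K B hadd₁ hadd₂ hnd k η hη BL hBL shift hshift α β hαN hβN
end

section
/- The coefficient c_{110} of xy in -½ ∑_{j=1}^{k-1} log(((1+x)^{1/k} - η^{-j}(1+y)^{1/k})/(1-η^{-j})) equals -(1/(2k²)) ∑_{j=1}^{k-1} η^{-j}/(1-η^{-j})². -/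
/-! Near `x = y = 0` every logarithm is taken near `1`, away from the branch cut, so one may
differentiate term by term: `∂_y log(((1+x)^c - a(1+y)^c)/(1-a))` at `y = 0` is
`-a c / ((1+x)^c - a)`, whose `x`-derivative at `0` is `a c² / (1-a)²`; with `c = 1/k` and
`a = η^{-j}` (which is `≠ 1` for `0 < j < k` since `η` is primitive) this gives the claim. -/

open Complex Filter Topology

theorem IsPrimitiveRoot.zpow_neg_ne_one {G : Type*} [DivisionCommMonoid G] {η : G} {k j : ℕ}
    (hη : IsPrimitiveRoot η k) (hj0 : 0 < j) (hjk : j < k) : η ^ (-(j : ℤ)) ≠ 1 := by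
  rw [Ne, hη.zpow_eq_one_iff_dvd, dvd_neg, Int.natCast_dvd_natCast]
  exact fun h => absurd (Nat.le_of_dvd hj0 h) (by omega)

theorem hasDerivAt_one_add_cpow (c : ℂ) : HasDerivAt (fun x : ℂ => (1 + x) ^ c) c 0 := by
  simpa using ((hasDerivAt_id (0 : ℂ)).const_add 1).cpow_const (c := c) (by simp)

theorem eventually_hasDerivAt_log_cpow_sub {a : ℂ} (ha : a ≠ 1) (c : ℂ) :
    ∀ᶠ x in 𝓝 (0 : ℂ), HasDerivAt (fun y => log (((1 + x) ^ c - a * (1 + y) ^ c) / (1 - a)))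
      (-(a * c) / ((1 + x) ^ c - a)) 0 := by
  have ha' : 1 - a ≠ 0 := sub_ne_zero.mpr ha.symm
  have hcont : ContinuousAt (fun x : ℂ => ((1 + x) ^ c - a) / (1 - a)) 0 :=
    ((hasDerivAt_one_add_cpow c).continuousAt.sub continuousAt_const).div_const _
  have hmem : ((1 + (0 : ℂ)) ^ c - a) / (1 - a) ∈ slitPlane := by
    simp [div_self ha']
  filter_upwards [hcont.eventually_mem (isOpen_slitPlane.mem_nhds hmem)] with x hx
  have hne : (1 + x) ^ c - a ≠ 0 := fun h => slitPlane_ne_zero hx (by simp [h])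
  have hlin : HasDerivAt (fun y => ((1 + x) ^ c - a * (1 + y) ^ c) / (1 - a))
      (-(a * c) / (1 - a)) 0 :=
    (((hasDerivAt_one_add_cpow c).const_mul a).const_sub _).div_const _
  convert hlin.clog (by simpa using hx) using 1
  simp only [add_zero, one_cpow, mul_one]
  field_simp

theorem hasDerivAt_div_cpow_sub {a : ℂ} (ha : a ≠ 1) (c : ℂ) :
    HasDerivAt (fun x : ℂ => -(a * c) / ((1 + x) ^ c - a)) (a * c ^ 2 / (1 - a) ^ 2) 0 := by
  have ha' : 1 - a ≠ 0 := sub_ne_zero.mpr ha.symm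
  have hden := (hasDerivAt_one_add_cpow c).sub_const a
  refine ((hasDerivAt_const (0 : ℂ) (-(a * c))).fun_div hden (by simpa using ha')).congr_deriv ?_
  simp only [add_zero, one_cpow]
  field_simp
  ring

theorem deriv_deriv_eq_of_eventually_hasDerivAt {𝕜 E : Type*} [NontriviallyNormedField 𝕜]
    [NormedAddCommGroup E] [NormedSpace 𝕜 E] {f : 𝕜 → 𝕜 → E} {g : 𝕜 → E} {d : E} {x₀ y₀ : 𝕜}
    (hf : ∀ᶠ x in 𝓝 x₀, HasDerivAt (f x) (g x) y₀) (hg : HasDerivAt g d x₀) :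
    deriv (fun x => deriv (f x) y₀) x₀ = d := by
  have hfg : (fun x => deriv (f x) y₀) =ᶠ[𝓝 x₀] g := hf.mono fun x hx => hx.deriv
  rw [hfg.deriv_eq, hg.deriv]

/-- The coefficient of `xy` is the mixed partial `∂²F/∂x∂y` at `x = y = 0`. -/
theorem stmt17_general (k : ℕ) (η : ℂ) (hη : IsPrimitiveRoot η k)
    (F : ℂ → ℂ → ℂ)
    (hF : ∀ x y, F x y = -(1 / 2) * ∑ j ∈ Finset.Ico 1 k,
        Complex.log (((1 + x) ^ ((k : ℂ)⁻¹) - η ^ (-(j : ℤ)) * (1 + y) ^ ((k : ℂ)⁻¹))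
          / (1 - η ^ (-(j : ℤ))))) :
    deriv (fun x => deriv (fun y => F x y) 0) 0
      = -(1 / (2 * (k : ℂ) ^ 2)) *
          ∑ j ∈ Finset.Ico 1 k, η ^ (-(j : ℤ)) / (1 - η ^ (-(j : ℤ))) ^ 2 := by
  have ha : ∀ j ∈ Finset.Ico 1 k, η ^ (-(j : ℤ)) ≠ 1 := fun j hj =>
    have hj := Finset.mem_Ico.mp hj
    hη.zpow_neg_ne_one hj.1 hj.2
  have hinner : ∀ᶠ x in 𝓝 (0 : ℂ), ∀ j ∈ Finset.Ico 1 k, _ :=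
    (Finset.Ico 1 k).eventually_all.mpr fun j hj =>
      eventually_hasDerivAt_log_cpow_sub (ha j hj) (k : ℂ)⁻¹
  have houter := (HasDerivAt.fun_sum fun j hj =>
    hasDerivAt_div_cpow_sub (ha j hj) (k : ℂ)⁻¹).const_mul (-(1 / 2) : ℂ)
  rw [deriv_deriv_eq_of_eventually_hasDerivAt ?_ houter]
  · rw [Finset.mul_sum, Finset.mul_sum]
    exact Finset.sum_congr rfl fun j _ => by ring
  · filter_upwards [hinner] with x hx
    rw [funext (hF x)]
    exact (HasDerivAt.fun_sum hx).const_mul _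

/-- The coefficient `c₁₁₀` of `xy` (equivalently, the mixed partial `∂²/∂x∂y` at `x = y = 0`)
of `-½ ∑_{j=1}^{k-1} log(((1+x)^{1/k} - η^{-j}(1+y)^{1/k})/(1-η^{-j}))` equals
`-(1/(2k²)) ∑_{j=1}^{k-1} η^{-j}/(1-η^{-j})²`. -/
theorem stmt17 (k : ℕ) (hk : 0 < k) (η : ℂ) (hη : IsPrimitiveRoot η k)
    (F : ℂ → ℂ → ℂ)
    (hF : ∀ x y, F x y = -(1 / 2) * ∑ j ∈ Finset.Ico 1 k,
        Complex.log (((1 + x) ^ ((k : ℂ)⁻¹) - η ^ (-(j : ℤ)) * (1 + y) ^ ((k : ℂ)⁻¹))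
          / (1 - η ^ (-(j : ℤ))))) :
    deriv (fun x => deriv (fun y => F x y) 0) 0
      = -(1 / (2 * (k : ℂ) ^ 2)) *
          ∑ j ∈ Finset.Ico 1 k, η ^ (-(j : ℤ)) / (1 - η ^ (-(j : ℤ))) ^ 2 :=
  stmt17_general k η hη F hF
end
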